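/- If c = f(A,D) is a semistandard symplectic column for sp(2n) with double dble(c) having left/right columns with entries (a_i) in A, (b_i) in B, (c_i) in C, (d_i) in D, and if s ≤ #A and α is an integer with b_s ≤ α < a_{s+1} (or only b_s ≤ α when s = #A), then the truncated column with A^{≤α} = A∩[1,α] and D^{≤α} = D∩[1,α] is a semistandard symplectic column for sp(2α), and its double equals the pair (A^{≤α}∪B^{≤α}, C^{≤α}∪D^{≤α}), i.e. B^{≤α} and C^{≤α} are obtained from A^{≤α}, D^{≤α} by the doubling construction inside [1,α]. -/

import Mathlib

/-- The increasing enumeration of a finite set of integers. -/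
def fsort (X : Finset ℤ) : List ℤ := X.sort (· ≤ ·)

/-- The `m`-th smallest element of `X` (0-based; junk value `0` out of range). -/
def nthF (X : Finset ℤ) (m : ℕ) : ℤ := (fsort X).getD m 0

/-- `J` dominates `I` elementwise: `#J = #I` and `i_m < j_m` for all `m`. -/
def Dominates (I J : Finset ℤ) : Prop :=
  J.card = I.card ∧ ∀ m, m < I.card → nthF I m < nthF J m

/-- Lexicographic comparison of finite sets of integers via their increasing enumerations. -/
def lexLE (X Y : Finset ℤ) : Prop := X = Y ∨ List.Lex (· < ·) (fsort X) (fsort Y)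

/-- `A, D` describe a semistandard symplectic column for `sp(2n)`. -/
def ColSS (n : ℕ) (A D : Finset ℤ) : Prop :=
  A ⊆ Finset.Icc 1 (n : ℤ) ∧ D ⊆ Finset.Icc 1 (n : ℤ) ∧ A.card + D.card ≤ n ∧
    ∃ J ⊆ Finset.Icc 1 (n : ℤ) \ (A ∪ D), Dominates (A ∩ D) J

/-- `(B, C)` is the double of the column `(A, D)`: `B = (A\I) ∪ J`, `C = (D\I) ∪ J` where
`I = A ∩ D` and `J` is the lexicographically smallest subset of the complement of `A ∪ D`
in `{1,…,n}` dominating `I` elementwise. -/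
def IsDouble (n : ℕ) (A D B C : Finset ℤ) : Prop :=
  ∃ J, J ⊆ Finset.Icc 1 (n : ℤ) \ (A ∪ D) ∧ Dominates (A ∩ D) J ∧
    (∀ J', J' ⊆ Finset.Icc 1 (n : ℤ) \ (A ∪ D) → Dominates (A ∩ D) J' → lexLE J J') ∧
    B = (A \ (A ∩ D)) ∪ J ∧ C = (D \ (A ∩ D)) ∪ J

/-!
Write `I = A ∩ D`, so `B = (A \ I) ∪ J`. Since `J` dominates `I`, it has at most as many
entries `≤ α` as `I`, hence `#B^{≤α} ≤ #A^{≤α}`. The bounds on `α` give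
`#B^{≤α} ≥ s ≥ #A^{≤α}`, so `J` and `I` have equally many entries `≤ α`; then `J^{≤α}` is an
initial segment of `J` dominating the initial segment `I^{≤α}` of `I`, which yields the
truncated column and the formulas for `B^{≤α}, C^{≤α}`. Lexicographic minimality of `J^{≤α}`
follows by exchange: if `J'` beat `J^{≤α}`, replacing the entry of `J` at the first position
where they differ by the entry of `J'` would give a dominating set beating `J`.
-/

open Finset

namespace List

variable {α : Type*}

theorem exists_append_cons_of_lex {r : α → α → Prop} :
    ∀ {l₁ l₂ : List α}, Lex r l₁ l₂ → l₁.length = l₂.length →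
      ∃ p a b u v, l₁ = p ++ a :: u ∧ l₂ = p ++ b :: v ∧ r a b
  | _, _, .nil, h => by simp at h
  | _, _, .rel (a₁ := a) (a₂ := b) (l₁ := u) (l₂ := v) hab, _ => ⟨[], a, b, u, v, rfl, rfl, hab⟩
  | _, _, .cons (a := c) h, hlen => by
    obtain ⟨p, a, b, u, v, rfl, rfl, hab⟩ := exists_append_cons_of_lex h (by simpa using hlen)
    exact ⟨c :: p, a, b, u, v, rfl, rfl, hab⟩

theorem getD_append_cons_of_ne {p v : List α} {a b d : α} {m : ℕ} (hm : m ≠ p.length) :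
    (p ++ a :: v).getD m d = (p ++ b :: v).getD m d := by
  rcases Nat.lt_or_gt_of_ne hm with hm | hm
  · rw [getD_append _ _ _ _ hm, getD_append _ _ _ _ hm]
  · obtain ⟨k, rfl⟩ := Nat.exists_eq_add_of_lt hm
    rw [getD_append_right _ _ _ _ (by omega), getD_append_right _ _ _ _ (by omega)]
    simp [show p.length + k + 1 - p.length = k + 1 by omega]

theorem pairwise_append_cons_of_lt [Preorder α] {p u v : List α} {a b : α}
    (h₁ : (p ++ a :: u).Pairwise (· < ·)) (h₂ : (p ++ b :: v).Pairwise (· < ·)) (hab : a < b) :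
    (p ++ a :: v).Pairwise (· < ·) := by
  simp only [pairwise_append, pairwise_cons, mem_cons] at h₁ h₂ ⊢
  refine ⟨h₂.1, ⟨fun c hc => hab.trans (h₂.2.1.1 c hc), h₂.2.1.2⟩, ?_⟩
  rintro c hc d (rfl | hd)
  · exact h₁.2.2 c hc d (Or.inl rfl)
  · exact h₂.2.2 c hc d (Or.inr hd)

end List

theorem fsort_pairwise (X : Finset ℤ) : (fsort X).Pairwise (· < ·) :=
  (Finset.sortedLT_sort X).pairwise

@[simp] theorem mem_fsort {X : Finset ℤ} {a : ℤ} : a ∈ fsort X ↔ a ∈ X := Finset.mem_sort _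

@[simp] theorem length_fsort (X : Finset ℤ) : (fsort X).length = #X := Finset.length_sort _

theorem fsort_injective : Function.Injective fsort := fun X Y h => by
  ext x; rw [← mem_fsort, h, mem_fsort]

theorem fsort_toFinset {l : List ℤ} (hl : l.Pairwise (· < ·)) : fsort l.toFinset = l :=
  (List.toFinset_sort _ hl.nodup).2 (hl.imp le_of_lt)

theorem fsort_eq_of_mem_iff {X : Finset ℤ} {l : List ℤ} (hl : l.Pairwise (· < ·))
    (hX : ∀ x, x ∈ l ↔ x ∈ X) : fsort X = l := by
  rw [← fsort_toFinset hl]; congr; ext x; simp [hX]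

theorem nthF_mem {X : Finset ℤ} {m : ℕ} (hm : m < #X) : nthF X m ∈ X := by
  rw [nthF, List.getD_eq_getElem _ _ (by simpa using hm), ← mem_fsort]
  exact List.getElem_mem _

theorem lexLE_iff_fsort_le {X Y : Finset ℤ} : lexLE X Y ↔ fsort X ≤ fsort Y := by
  rw [lexLE, le_iff_eq_or_lt, fsort_injective.eq_iff]; rfl

section Truncation

variable (X : Finset ℤ) (α : ℤ)

theorem fsort_eq_fsort_filter_le_append :
    fsort X = fsort (X.filter (· ≤ α)) ++ fsort (X.filter (α < ·)) := by
  refine fsort_eq_of_mem_iff ?_ fun x => ?_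
  · refine List.pairwise_append.2 ⟨fsort_pairwise _, fsort_pairwise _, fun a ha b hb => ?_⟩
    simp only [mem_fsort, mem_filter] at ha hb
    exact ha.2.trans_lt hb.2
  · simp only [List.mem_append, mem_fsort, mem_filter]
    constructor
    · rintro (h | h) <;> exact h.1
    · intro h; exact (le_or_gt x α).imp (⟨h, ·⟩) (⟨h, ·⟩)

variable {X α}

theorem nthF_filter_le {m : ℕ} (hm : m < #(X.filter (· ≤ α))) :
    nthF (X.filter (· ≤ α)) m = nthF X m := by
  rw [nthF, nthF, fsort_eq_fsort_filter_le_append X α, List.getD_append _ _ _ _ (by simpa using hm)]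

theorem lt_card_filter_le_iff {m : ℕ} (hm : m < #X) :
    m < #(X.filter (· ≤ α)) ↔ nthF X m ≤ α := by
  constructor
  · intro h
    have := nthF_mem h
    rw [nthF_filter_le h] at this
    exact (mem_filter.1 this).2
  · intro h
    by_contra! hge
    have hsplit := congrArg List.length (fsort_eq_fsort_filter_le_append X α)
    simp only [length_fsort, List.length_append] at hsplit
    have hmem : nthF X m ∈ X.filter (α < ·) := by
      rw [nthF, fsort_eq_fsort_filter_le_append X α, List.getD_append_right _ _ _ _ (by simpa),
        ← nthF]
      exact nthF_mem (by simp; omega)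
    exact (mem_filter.1 hmem).2.not_ge h

end Truncation

namespace Dominates

variable {I J : Finset ℤ}

theorem card_filter_le_le (h : Dominates I J) (α : ℤ) :
    #(J.filter (· ≤ α)) ≤ #(I.filter (· ≤ α)) := by
  by_contra! hlt
  set r := #(I.filter (· ≤ α))
  have hrJ : r < #J := hlt.trans_le (card_filter_le _ _)
  have hrI : r < #I := h.1 ▸ hrJ
  have hJα : nthF J r ≤ α := (lt_card_filter_le_iff hrJ).1 hlt
  have hIα : nthF I r ≤ α := ((h.2 r hrI).trans_le hJα).le
  exact (lt_card_filter_le_iff hrI).2 hIα |>.false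

theorem filter_le (h : Dominates I J) {α : ℤ}
    (hcard : #(J.filter (· ≤ α)) = #(I.filter (· ≤ α))) :
    Dominates (I.filter (· ≤ α)) (J.filter (· ≤ α)) := by
  refine ⟨hcard, fun m hm => ?_⟩
  rw [nthF_filter_le hm, nthF_filter_le (hcard ▸ hm)]
  exact h.2 m (hm.trans_le (card_filter_le _ _))

end Dominates

def IsLexMinDominating (S I J : Finset ℤ) : Prop :=
  J ⊆ S ∧ Dominates I J ∧ ∀ J' ⊆ S, Dominates I J' → lexLE J J'

theorem isDouble_iff {n : ℕ} {A D B C : Finset ℤ} :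
    IsDouble n A D B C ↔ ∃ J, IsLexMinDominating (Icc 1 (n : ℤ) \ (A ∪ D)) (A ∩ D) J ∧
      B = (A \ (A ∩ D)) ∪ J ∧ C = (D \ (A ∩ D)) ∪ J := by
  simp only [IsDouble, IsLexMinDominating, and_assoc]

-- `hS'` puts the exchanged entry, which is smaller than an entry of `J`, into `S`.
theorem IsLexMinDominating.filter_le {S S' I J : Finset ℤ} {α : ℤ}
    (h : IsLexMinDominating S I J) (hcard : #(J.filter (· ≤ α)) = #(I.filter (· ≤ α)))
    (hJS' : J.filter (· ≤ α) ⊆ S') (hS' : ∀ x ∈ S', ∀ y ∈ S, x < y → x ∈ S) :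
    IsLexMinDominating S' (I.filter (· ≤ α)) (J.filter (· ≤ α)) := by
  obtain ⟨hJS, hdom, hmin⟩ := h
  refine ⟨hJS', hdom.filter_le hcard, fun J' hJ'S' hdom' => ?_⟩
  rw [lexLE_iff_fsort_le]
  by_contra! hlt
  obtain ⟨p, x, y, u, w, hJ', hJα, hxy⟩ := List.exists_append_cons_of_lex hlt
    (by simp only [length_fsort, hdom'.1, hcard])
  set v := w ++ fsort (J.filter (α < ·))
  have hJ : fsort J = p ++ y :: v := by
    rw [fsort_eq_fsort_filter_le_append J α, hJα]; simp [v]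
  have hJ₂ : fsort (p ++ x :: v).toFinset = p ++ x :: v :=
    fsort_toFinset (List.pairwise_append_cons_of_lt (hJ' ▸ fsort_pairwise J')
      (hJ ▸ fsort_pairwise J) hxy)
  have hpJ' : p.length < #(I.filter (· ≤ α)) := by
    rw [← hdom'.1, ← length_fsort, hJ']; simp
  have hJ₂S : (p ++ x :: v).toFinset ⊆ S := by
    intro b hb
    simp only [List.mem_toFinset, List.mem_append, List.mem_cons] at hb
    rcases hb with hb | rfl | hb
    · exact hJS (mem_fsort.1 (hJ ▸ List.mem_append_left _ hb))
    · exact hS' b (hJ'S' (mem_fsort.1 (by simp [hJ']))) y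
        (hJS (mem_fsort.1 (by simp [hJ]))) hxy
    · exact hJS (mem_fsort.1 (by simp [hJ, hb]))
  have hdom₂ : Dominates I (p ++ x :: v).toFinset := by
    refine ⟨by rw [← length_fsort, hJ₂, ← hdom.1, ← length_fsort, hJ]; simp, fun m hm => ?_⟩
    rw [show nthF (p ++ x :: v).toFinset m = (p ++ x :: v).getD m 0 by rw [nthF, hJ₂]]
    by_cases hmp : m = p.length
    · subst hmp
      have := hdom'.2 p.length hpJ'
      rw [nthF_filter_le hpJ'] at this
      simpa [nthF, hJ'] using this
    · rw [List.getD_append_cons_of_ne hmp, ← hJ]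
      exact hdom.2 m hm
  have hle := lexLE_iff_fsort_le.1 (hmin _ hJ₂S hdom₂)
  rw [hJ, hJ₂] at hle
  exact hle.not_gt (List.append_left_lt (List.cons_lt_cons_iff.2 (Or.inl hxy)))

theorem Finset.filter_sdiff_union_distrib {β : Type*} [DecidableEq β] (p : β → Prop)
    [DecidablePred p] (A I J : Finset β) :
    ((A \ I) ∪ J).filter p = (A.filter p \ I.filter p) ∪ J.filter p := by
  ext; simp only [mem_filter, mem_union, mem_sdiff]; tauto

theorem Finset.card_sdiff_union_add_card {β : Type*} [DecidableEq β] {A I J : Finset β}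
    (hIA : I ⊆ A) (hJA : Disjoint J A) : #((A \ I) ∪ J) + #I = #A + #J := by
  rw [card_union_of_disjoint (disjoint_of_subset_left sdiff_subset hJA.symm),
    card_sdiff_of_subset hIA]
  have := card_le_card hIA
  omega

theorem Dominates.card_filter_le_eq {A I J : Finset ℤ} (h : Dominates I J) (hIA : I ⊆ A)
    (hJA : Disjoint J A) {α : ℤ}
    (hle : #(A.filter (· ≤ α)) ≤ #(((A \ I) ∪ J).filter (· ≤ α))) :
    #(J.filter (· ≤ α)) = #(I.filter (· ≤ α)) := by
  have hsum : #(((A \ I) ∪ J).filter (· ≤ α)) + #(I.filter (· ≤ α)) =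
      #(A.filter (· ≤ α)) + #(J.filter (· ≤ α)) := by
    rw [filter_sdiff_union_distrib]
    exact card_sdiff_union_add_card (filter_subset_filter _ hIA) (disjoint_filter_filter hJA)
  have := h.card_filter_le_le α
  omega

theorem Int.Icc_one_toNat (α : ℤ) : Icc 1 (α.toNat : ℤ) = Icc 1 α := by
  ext x; simp only [mem_Icc]; omega

theorem Finset.filter_le_subset_Icc {X : Finset ℤ} {a b : ℤ} (h : X ⊆ Icc a b) (c : ℤ) :
    X.filter (· ≤ c) ⊆ Icc a c := fun _ hx =>
  mem_Icc.2 ⟨(mem_Icc.1 (h (mem_filter.1 hx).1)).1, (mem_filter.1 hx).2⟩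

theorem Finset.filter_le_subset_Icc_sdiff {X Y : Finset ℤ} {a b : ℤ} (h : X ⊆ Icc a b \ Y) (c : ℤ) :
    X.filter (· ≤ c) ⊆ Icc a c \ Y.filter (· ≤ c) := fun _ hx => by
  obtain ⟨hxX, hxc⟩ := mem_filter.1 hx
  obtain ⟨hxI, hxY⟩ := mem_sdiff.1 (h hxX)
  exact mem_sdiff.2 ⟨filter_le_subset_Icc (fun _ h => h) c (mem_filter.2 ⟨hxI, hxc⟩),
    fun hY => hxY (mem_filter.1 hY).1⟩

-- `#A + #D = #(A ∪ D) + #J = #(A ∪ D ∪ J) ≤ n`.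
theorem colSS_of_dominates {n : ℕ} {A D J : Finset ℤ} (hA : A ⊆ Icc 1 (n : ℤ))
    (hD : D ⊆ Icc 1 (n : ℤ)) (hJ : J ⊆ Icc 1 (n : ℤ) \ (A ∪ D)) (hdom : Dominates (A ∩ D) J) :
    ColSS n A D := by
  refine ⟨hA, hD, ?_, J, hJ, hdom⟩
  have hsub : (A ∪ D) ∪ J ⊆ Icc 1 (n : ℤ) :=
    union_subset (union_subset hA hD) (hJ.trans sdiff_subset)
  have hle := card_le_card hsub
  rw [card_union_of_disjoint (disjoint_of_subset_right hJ disjoint_sdiff), Int.card_Icc] at hle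
  have := card_union_add_card_inter A D
  have := hdom.1
  simp only [add_sub_cancel_right, Int.toNat_natCast] at hle
  omega

theorem column_splitting_general (n : ℕ) (A D B C : Finset ℤ)
    (h1 : ColSS n A D) (h2 : IsDouble n A D B C)
    (s : ℕ) (hs2 : s ≤ A.card) (α : ℤ)
    (hα1 : nthF B (s - 1) ≤ α) (hα2 : s < A.card → α < nthF A s) :
    ColSS α.toNat (A.filter (· ≤ α)) (D.filter (· ≤ α)) ∧
    IsDouble α.toNat (A.filter (· ≤ α)) (D.filter (· ≤ α))
      (B.filter (· ≤ α)) (C.filter (· ≤ α)) := by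
  obtain ⟨hA, hD, -, -⟩ := h1
  obtain ⟨J, hJ, rfl, rfl⟩ := isDouble_iff.1 h2
  have hJA : Disjoint J A := disjoint_of_subset_left hJ.1
    (disjoint_sdiff_self_left.mono_right subset_union_left)
  have hAα : #(A.filter (· ≤ α)) ≤ s := by
    rcases hs2.lt_or_eq with hs | rfl
    · by_contra! h
      exact (hα2 hs).not_ge ((lt_card_filter_le_iff hs).1 h)
    · exact card_filter_le _ _
  have hBα : s ≤ #(((A \ (A ∩ D)) ∪ J).filter (· ≤ α)) := by
    rcases s with _ | s
    · exact Nat.zero_le _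
    · have := card_sdiff_union_add_card (inter_subset_left (s₂ := D)) hJA
      exact (lt_card_filter_le_iff (by have := hJ.2.1.1; omega)).2 hα1
  have hcnt := hJ.2.1.card_filter_le_eq inter_subset_left hJA (hAα.trans hBα)
  have hIα : (A ∩ D).filter (· ≤ α) = A.filter (· ≤ α) ∩ D.filter (· ≤ α) :=
    filter_inter_distrib _ _ _
  have hJα : J.filter (· ≤ α) ⊆ Icc 1 (α.toNat : ℤ) \ (A.filter (· ≤ α) ∪ D.filter (· ≤ α)) := by
    rw [Int.Icc_one_toNat, ← filter_union]
    exact filter_le_subset_Icc_sdiff hJ.1 α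
  have hmin := hJ.filter_le hcnt hJα fun x hx y hy hxy => by
    simp only [Int.Icc_one_toNat, mem_sdiff, mem_Icc, mem_union, mem_filter] at hx hy ⊢
    exact ⟨⟨hx.1.1, by omega⟩, by tauto⟩
  rw [hIα] at hmin
  refine ⟨colSS_of_dominates ?_ ?_ hJα hmin.2.1, isDouble_iff.2 ⟨_, hmin, ?_, ?_⟩⟩
  · rw [Int.Icc_one_toNat]; exact filter_le_subset_Icc hA α
  · rw [Int.Icc_one_toNat]; exact filter_le_subset_Icc hD α
  all_goals rw [filter_sdiff_union_distrib, hIα]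

/-- **column splitting.** Let `c = f(A,D)` be a semistandard symplectic column
for `sp(2n)` with double `(A,B,C,D)`, let `1 ≤ s ≤ #A` and let `α` be an integer with
`b_s ≤ α`, and `α < a_{s+1}` whenever `s < #A`.  Then the truncated column
`(A^{≤α}, D^{≤α})` is a semistandard symplectic column for `sp(2α)` and its double is
`(B^{≤α}, C^{≤α})`: the doubling construction commutes with truncation at `α`. -/
theorem column_splitting (n : ℕ) (A D B C : Finset ℤ)
    (h1 : ColSS n A D) (h2 : IsDouble n A D B C)
    (s : ℕ) (hs1 : 1 ≤ s) (hs2 : s ≤ A.card) (α : ℤ)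
    (hα1 : nthF B (s - 1) ≤ α) (hα2 : s < A.card → α < nthF A s) :
    ColSS α.toNat (A.filter (· ≤ α)) (D.filter (· ≤ α)) ∧
    IsDouble α.toNat (A.filter (· ≤ α)) (D.filter (· ≤ α))
      (B.filter (· ≤ α)) (C.filter (· ≤ α)) :=
  column_splitting_general n A D B C h1 h2 s hs2 α hα1 hα2
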